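/- For β* solving β* + σ²(α+1)/(σ√(α+1) + β*) = b with b > σ√(α+1), σ > 0, α > 0, we have β* > 0; moreover as b → ∞, b − β* → 0, i.e., the thresholding rule is asymptotically unbiased for large signals. -/
import Mathlib


open Real Filter

theorem gdp_map_asymptotic_unbiasedness (σ α : ℝ) (hσ : 0 < σ) (hα : 0 < α)
    (F : ℝ → ℝ)
    (hF : ∀ b, F b = (b - σ * Real.sqrt (α + 1) +
        Real.sqrt (b ^ 2 + 2 * b * σ * Real.sqrt (α + 1) - 3 * σ ^ 2 * (α + 1))) / 2) :
    (∀ b, σ * Real.sqrt (α + 1) < b → 0 < F b) ∧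
    Tendsto (fun b => b - F b) atTop (nhds 0) := by
  set s : ℝ := σ * Real.sqrt (α + 1) with hs_def
  have hs : 0 < s := mul_pos hσ (Real.sqrt_pos.mpr (by linarith))
  have hs2 : s ^ 2 = σ ^ 2 * (α + 1) := by
    rw [hs_def, mul_pow, Real.sq_sqrt (by linarith : (0:ℝ) ≤ α + 1)]
  have hD : ∀ b : ℝ, b ^ 2 + 2 * b * σ * Real.sqrt (α + 1) - 3 * σ ^ 2 * (α + 1)
      = (b + s) ^ 2 - 4 * s ^ 2 := by
    intro b
    rw [hs_def] at hs2 ⊢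
    nlinarith [hs2]
  constructor
  · intro b hb
    rw [hF b]
    have h := Real.sqrt_nonneg (b ^ 2 + 2 * b * σ * Real.sqrt (α + 1) - 3 * σ ^ 2 * (α + 1))
    linarith
  · have key : ∀ b : ℝ, s < b →
        0 ≤ b - F b ∧ b - F b ≤ 2 * s ^ 2 / (b + s) := by
      intro b hb
      have hbs : 0 < b + s := by linarith
      have hDnn : 0 ≤ (b + s) ^ 2 - 4 * s ^ 2 := by nlinarith
      have hle : Real.sqrt ((b + s) ^ 2 - 4 * s ^ 2) ≤ b + s := by
        have := Real.sqrt_le_sqrt (by nlinarith : (b + s) ^ 2 - 4 * s ^ 2 ≤ (b + s) ^ 2)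
        rwa [Real.sqrt_sq hbs.le] at this
      have hmul : Real.sqrt ((b + s) ^ 2 - 4 * s ^ 2) * Real.sqrt ((b + s) ^ 2 - 4 * s ^ 2)
          = (b + s) ^ 2 - 4 * s ^ 2 := Real.mul_self_sqrt hDnn
      have hnn := Real.sqrt_nonneg ((b + s) ^ 2 - 4 * s ^ 2)
      have hFb : F b = (b - s + Real.sqrt ((b + s) ^ 2 - 4 * s ^ 2)) / 2 := by
        rw [hF b, hD b]
      constructor
      · rw [hFb]; linarith
      · rw [hFb, le_div_iff₀ hbs]
        nlinarith [mul_le_mul_of_nonneg_left hle hnn]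
    have hbound : Tendsto (fun b : ℝ => 2 * s ^ 2 / (b + s)) atTop (nhds 0) :=
      Tendsto.div_atTop tendsto_const_nhds (tendsto_atTop_add_const_right _ s tendsto_id)
    refine tendsto_of_tendsto_of_tendsto_of_le_of_le' tendsto_const_nhds hbound ?_ ?_
    · filter_upwards [eventually_gt_atTop s] with b hb using (key b hb).1
    · filter_upwards [eventually_gt_atTop s] with b hb using (key b hb).2
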